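/- Let C be an n×n positive definite matrix and let R, S be positive definite commuting matrices with R + S = I. With P = RCR and Q = SCS, the spectral geometric mean satisfies P ♮ Q = (RS)^{1/2} C (RS)^{1/2}, and hence Tr(P ♮ Q) = Tr(RSC). -/

import Mathlib

/-!
`X = S R⁻¹` is positive semidefinite, being a product of commuting positive matrices, and solves
the Riccati equation `X P X = Q`; hence `P⁻¹ # Q = S R⁻¹`. Its square root is `(RS)^{1/2} R⁻¹`,
and conjugating `P = RCR` by it leaves `(RS)^{1/2} C (RS)^{1/2}`, since `R` commutes with
`(RS)^{1/2}`. The trace identity is then cyclicity of the trace.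
-/

open Matrix ComplexOrder

namespace Heron

variable {n : ℕ}

def WeakMaj {n : ℕ} (x y : Fin n → ℝ) : Prop :=
  ∀ s : Finset (Fin n), ∃ t : Finset (Fin n),
    t.card = s.card ∧ ∑ i ∈ s, x i ≤ ∑ i ∈ t, y i

def Maj {n : ℕ} (x y : Fin n → ℝ) : Prop :=
  WeakMaj x y ∧ ∑ i, x i = ∑ i, y i

lemma sandwich_posSemidef {S T : Matrix (Fin n) (Fin n) ℂ} (hS : S.IsHermitian)
    (hT : T.PosSemidef) : (S * T * S).PosSemidef := by
  have h := hT.mul_mul_conjTranspose_same S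
  rwa [hS.eq] at h

/-- Mathlib's definition of the matrix square root as of December 2024. -/
noncomputable def _root_.Matrix.PosSemidef.sqrt {m : Type*} [Fintype m] [DecidableEq m]
    {𝕜 : Type*} [RCLike 𝕜] {A : Matrix m m 𝕜} (hA : A.PosSemidef) : Matrix m m 𝕜 :=
  hA.1.eigenvectorUnitary.1 * diagonal ((↑) ∘ (√·) ∘ hA.1.eigenvalues) *
  (star hA.1.eigenvectorUnitary : Matrix m m 𝕜)

lemma _root_.Matrix.PosSemidef.posSemidef_sqrt {m : Type*} [Fintype m] [DecidableEq m]
    {𝕜 : Type*} [RCLike 𝕜] {A : Matrix m m 𝕜} (hA : A.PosSemidef) : hA.sqrt.PosSemidef := by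
  apply PosSemidef.mul_mul_conjTranspose_same
  refine posSemidef_diagonal_iff.mpr fun i ↦ ?_
  rw [Function.comp_apply, RCLike.nonneg_iff]
  constructor
  · simp only [RCLike.ofReal_re]
    exact Real.sqrt_nonneg _
  · simp only [RCLike.ofReal_im]

noncomputable def geomMean {A B : Matrix (Fin n) (Fin n) ℂ}
    (hA : A.PosDef) (hB : B.PosDef) : Matrix (Fin n) (Fin n) ℂ :=
  hA.posSemidef.sqrt *
    (sandwich_posSemidef hA.posSemidef.posSemidef_sqrt.isHermitian.inv
        hB.posSemidef).sqrt *
    hA.posSemidef.sqrt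

lemma geomMean_posSemidef {A B : Matrix (Fin n) (Fin n) ℂ}
    (hA : A.PosDef) (hB : B.PosDef) : (geomMean hA hB).PosSemidef :=
  sandwich_posSemidef hA.posSemidef.posSemidef_sqrt.isHermitian
    (Matrix.PosSemidef.posSemidef_sqrt _)

noncomputable def specMean {A B : Matrix (Fin n) (Fin n) ℂ}
    (hA : A.PosDef) (hB : B.PosDef) : Matrix (Fin n) (Fin n) ℂ :=
  (geomMean_posSemidef hA.inv hB).sqrt * A * (geomMean_posSemidef hA.inv hB).sqrt

def HasPosSpectrum (M : Matrix (Fin n) (Fin n) ℂ) : Prop :=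
  ∀ z ∈ spectrum ℂ M, 0 < z.re ∧ z.im = 0

def IsPrincipalSqrt (M S : Matrix (Fin n) (Fin n) ℂ) : Prop :=
  S * S = M ∧ HasPosSpectrum S

noncomputable def absMat (Y : Matrix (Fin n) (Fin n) ℂ) : Matrix (Fin n) (Fin n) ℂ :=
  (Matrix.posSemidef_conjTranspose_mul_self Y).sqrt

noncomputable def posPart (H : Matrix (Fin n) (Fin n) ℂ) : Matrix (Fin n) (Fin n) ℂ :=
  ((1 : ℂ) / 2) • (absMat H + H)

end Heron

namespace Matrix

open scoped MatrixOrder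

variable {m 𝕜 : Type*} [Fintype m] [DecidableEq m] [RCLike 𝕜] {A B : Matrix m m 𝕜}

lemma commute_nonsing_inv_right (h : Commute A B) : Commute A B⁻¹ := by
  by_cases hB : IsUnit B.det
  · simpa using h.units_inv_right (u := (isUnit_iff_isUnit_det B).mpr hB |>.unit)
  · simp [nonsing_inv_apply_not_isUnit B hB]

namespace PosSemidef

lemma sqrt_eq_cfcSqrt (hA : A.PosSemidef) : hA.sqrt = CFC.sqrt A := by
  rw [CFC.sqrt_eq_cfc, cfc_nnreal_eq_real _ A, hA.1.cfc_eq]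
  simp only [IsHermitian.cfc, Unitary.conjStarAlgAut_apply, Matrix.PosSemidef.sqrt]
  congr 3
  funext i
  simp [Real.coe_toNNReal', max_eq_left (hA.eigenvalues_nonneg i)]

lemma sqrt_mul_sqrt (hA : A.PosSemidef) : hA.sqrt * hA.sqrt = A := by
  rw [hA.sqrt_eq_cfcSqrt]
  exact CFC.sqrt_mul_sqrt_self A hA.nonneg

lemma sqrt_eq_of_mul_self_eq (hA : A.PosSemidef) (hB : B.PosSemidef) (h : B * B = A) :
    hA.sqrt = B := by
  rw [hA.sqrt_eq_cfcSqrt]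
  exact CFC.sqrt_unique h hB.nonneg

lemma commute_sqrt_left (hA : A.PosSemidef) (h : Commute A B) : Commute hA.sqrt B := by
  rw [hA.sqrt_eq_cfcSqrt, CFC.sqrt_eq_cfc]
  exact h.cfc_nnreal _

end PosSemidef

lemma PosDef.isUnit_sqrt (hA : A.PosDef) : IsUnit hA.posSemidef.sqrt := by
  rw [hA.posSemidef.sqrt_eq_cfcSqrt, CFC.isUnit_sqrt_iff A hA.posSemidef.nonneg]
  exact hA.isUnit

open scoped Matrix.Norms.L2Operator in
lemma PosSemidef.mul_of_commute {A B : Matrix m m ℂ} (hA : A.PosSemidef) (hB : B.PosSemidef)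
    (h : Commute A B) : (A * B).PosSemidef := by
  rw [← nonneg_iff_posSemidef] at *
  exact h.mul_nonneg hA hB

end Matrix

namespace Heron

lemma geomMean_eq_of_mul_inv_mul_eq {n : ℕ} {A B X : Matrix (Fin n) (Fin n) ℂ} (hA : A.PosDef)
    (hB : B.PosDef) (hX : X.PosSemidef) (h : X * A⁻¹ * X = B) : geomMean hA hB = X := by
  set W := hA.posSemidef.sqrt
  have hW : IsUnit W.det := (isUnit_iff_isUnit_det W).mp hA.isUnit_sqrt
  have hWinv : W⁻¹.IsHermitian := hA.posSemidef.posSemidef_sqrt.isHermitian.inv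
  have hinner : (sandwich_posSemidef hWinv hB.posSemidef).sqrt = W⁻¹ * X * W⁻¹ := by
    refine PosSemidef.sqrt_eq_of_mul_self_eq _ (sandwich_posSemidef hWinv hX) ?_
    calc W⁻¹ * X * W⁻¹ * (W⁻¹ * X * W⁻¹) = W⁻¹ * (X * (W * W)⁻¹ * X) * W⁻¹ := by
          simp only [Matrix.mul_inv_rev, mul_assoc]
      _ = W⁻¹ * B * W⁻¹ := by rw [hA.posSemidef.sqrt_mul_sqrt, h]
  change W * _ * W = X
  rw [hinner]
  simp only [mul_assoc, mul_nonsing_inv_cancel_left _ _ hW, nonsing_inv_mul _ hW, mul_one]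

lemma geomMean_inv_mul_mul_eq_mul_inv {n : ℕ} {C R S : Matrix (Fin n) (Fin n) ℂ}
    (hR : R.PosDef) (hS : S.PosSemidef) (hcomm : Commute R S)
    (hP : (R * C * R).PosDef) (hQ : (S * C * S).PosDef) : geomMean hP.inv hQ = S * R⁻¹ := by
  have hR₀ : IsUnit R.det := (isUnit_iff_isUnit_det R).mp hR.isUnit
  refine geomMean_eq_of_mul_inv_mul_eq _ _
    (hS.mul_of_commute hR.inv.posSemidef (commute_nonsing_inv_right hcomm.symm)) ?_
  rw [nonsing_inv_nonsing_inv _ ((isUnit_iff_isUnit_det _).mp hP.isUnit)]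
  calc S * R⁻¹ * (R * C * R) * (S * R⁻¹) = S * C * (R * S) * R⁻¹ := by
        simp only [mul_assoc, nonsing_inv_mul_cancel_left _ _ hR₀]
    _ = S * C * S := by rw [hcomm.eq, ← mul_assoc, mul_nonsing_inv_cancel_right _ _ hR₀]

theorem spectral_mean_of_pinched_general {n : ℕ} (C R S : Matrix (Fin n) (Fin n) ℂ)
    (hR : R.PosDef) (hS : S.PosDef)
    (hcomm : R * S = S * R)
    (hP : (R * C * R).PosDef) (hQ : (S * C * S).PosDef)
    (hRS : (R * S).PosSemidef) :
    specMean hP hQ = hRS.sqrt * C * hRS.sqrt ∧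
      (specMean hP hQ).trace = (R * S * C).trace := by
  set T := hRS.sqrt
  have hR₀ : IsUnit R.det := (isUnit_iff_isUnit_det R).mp hR.isUnit
  have hTR : Commute T R := hRS.commute_sqrt_left <| (Commute.refl R).mul_left hcomm.symm
  have hTR' : Commute T R⁻¹ := commute_nonsing_inv_right hTR
  have hsqrtG : (geomMean_posSemidef hP.inv hQ).sqrt = T * R⁻¹ := by
    refine PosSemidef.sqrt_eq_of_mul_self_eq _
      (hRS.posSemidef_sqrt.mul_of_commute hR.inv.posSemidef hTR') ?_
    calc T * R⁻¹ * (T * R⁻¹) = T * T * R⁻¹ * R⁻¹ := by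
          rw [mul_assoc T, ← mul_assoc R⁻¹, ← hTR'.eq]
          simp only [mul_assoc]
      _ = geomMean hP.inv hQ := by
          rw [geomMean_inv_mul_mul_eq_mul_inv hR hS.posSemidef hcomm hP hQ, hRS.sqrt_mul_sqrt,
            hcomm, mul_nonsing_inv_cancel_right _ _ hR₀]
  have hmain : specMean hP hQ = T * C * T := by
    rw [specMean, hsqrtG]
    calc T * R⁻¹ * (R * C * R) * (T * R⁻¹) = T * C * (R * T) * R⁻¹ := by
          simp only [mul_assoc, nonsing_inv_mul_cancel_left _ _ hR₀]
      _ = T * C * T := by rw [← hTR.eq, ← mul_assoc, mul_nonsing_inv_cancel_right _ _ hR₀]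
  refine ⟨hmain, ?_⟩
  rw [hmain, trace_mul_cycle, hRS.sqrt_mul_sqrt]

/-- for commuting `R, S > 0` with `R + S = I` and `P = RCR`,
`Q = SCS`, one has `P ♮ Q = (RS)^{1/2} C (RS)^{1/2}` and
`Tr(P ♮ Q) = Tr(RSC)`. -/
theorem spectral_mean_of_pinched {n : ℕ} (C R S : Matrix (Fin n) (Fin n) ℂ)
    (hC : C.PosDef) (hR : R.PosDef) (hS : S.PosDef)
    (hcomm : R * S = S * R) (hsum : R + S = 1)
    (hP : (R * C * R).PosDef) (hQ : (S * C * S).PosDef)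
    (hRS : (R * S).PosSemidef) :
    specMean hP hQ = hRS.sqrt * C * hRS.sqrt ∧
      (specMean hP hQ).trace = (R * S * C).trace :=
  spectral_mean_of_pinched_general C R S hR hS hcomm hP hQ hRS

end Heron
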